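/- Let T ∈ GL(2,ℝ) have at least one positive real eigenvalue, and let a ∈ ℝ² be nonzero with ‖T⁻¹(a)‖ < 1. Then the homeomorphism T̄ₐ(x) = (a+T(x))/‖a+T(x)‖ of S¹ has a fixed point. -/

import Mathlib

/-!
A unit vector `x` is a fixed point as soon as `a + T x = c • x` for some `c > 0`, i.e. `x` solves
`(c - T) x = a`. Let `l > 0` be the given eigenvalue, with eigenvector `v`, and `r₂ ≤ r₁` the two
roots of the characteristic polynomial, so `r₁ ≥ l > 0`. By Cayley–Hamilton, for `c > r₁`,
`(c - T)⁻¹ a = ((c - r₁) • a + (T a - r₂ • a)) / ((c - r₁) (c - r₂))`. If `T a ≠ r₂ • a`, its norm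
tends to `∞` as `c → r₁⁺` and to `0` as `c → ∞`, so it equals `1` somewhere. If `T a = r₂ • a`,
either `a / ‖a‖` is already a fixed point, or `r₂ ≤ -‖a‖` and the line `a / (l - r₂) + ℝ v`, which
passes through the closed unit disc, consists of solutions for `c = l`.
-/

/-- The "affine" map `x ↦ (a + T(x))/‖a + T(x)‖` induced on the unit sphere. -/
noncomputable def affAct {m : ℕ} (A : Matrix (Fin m) (Fin m) ℝ)
    (a x : EuclideanSpace ℝ (Fin m)) : EuclideanSpace ℝ (Fin m) :=
  ‖a + Matrix.toEuclideanLin A x‖⁻¹ • (a + Matrix.toEuclideanLin A x)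

open Matrix

section NormedSpace

variable {E : Type*} [NormedAddCommGroup E] [NormedSpace ℝ E]

lemma exists_norm_add_smul_eq_one {y v : E} (hy : ‖y‖ ≤ 1) (hv : v ≠ 0) :
    ∃ t : ℝ, ‖y + t • v‖ = 1 := by
  have hv' : 0 < ‖v‖ := norm_pos_iff.mpr hv
  have hfar : 1 ≤ ‖y + (2 / ‖v‖) • v‖ := by
    have h := norm_sub_norm_le ((2 / ‖v‖) • v) (-y)
    rw [sub_neg_eq_add, add_comm, norm_neg, norm_smul, Real.norm_of_nonneg (by positivity),
      div_mul_cancel₀ _ hv'.ne'] at h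
    linarith
  obtain ⟨t, -, ht⟩ := intermediate_value_Icc (by positivity : (0 : ℝ) ≤ 2 / ‖v‖)
    (by fun_prop : Continuous fun t : ℝ => ‖y + t • v‖).continuousOn
    (⟨by simpa using hy, hfar⟩ : (1 : ℝ) ∈ Set.Icc ‖y + (0 : ℝ) • v‖ ‖y + (2 / ‖v‖) • v‖)
  exact ⟨t, ht⟩

lemma exists_pos_norm_smul_add_eq {a b : E} (hb : b ≠ 0) {d : ℝ} (hd : 0 ≤ d) :
    ∃ s : ℝ, 0 < s ∧ ‖s • a + b‖ = s * (s + d) := by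
  set g : ℝ → ℝ := fun s => ‖s • a + b‖ - s * (s + d)
  set S := ‖a‖ + ‖b‖ + 1
  have hS : 1 ≤ S := by have := norm_nonneg a; have := norm_nonneg b; linarith
  have hg0 : 0 < g 0 := by simpa [g] using hb
  have hgS : g S < 0 := by
    have h : ‖S • a + b‖ ≤ S * ‖a‖ + ‖b‖ := by
      refine (norm_add_le _ _).trans ?_
      rw [norm_smul, Real.norm_of_nonneg (by linarith)]
    -- `S ^ 2 = S * (‖a‖ + ‖b‖ + 1) > S * ‖a‖ + ‖b‖` since `S ≥ 1`
    have : ‖b‖ ≤ S * ‖b‖ := le_mul_of_one_le_left (norm_nonneg b) hS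
    simp only [g]
    nlinarith
  obtain ⟨s, hs, hgs⟩ := intermediate_value_Icc' (by linarith : (0 : ℝ) ≤ S)
    (by fun_prop : Continuous g).continuousOn (⟨hgS.le, hg0.le⟩ : (0 : ℝ) ∈ Set.Icc (g S) (g 0))
  refine ⟨s, hs.1.lt_of_ne ?_, by simpa [g, sub_eq_zero] using hgs⟩
  rintro rfl
  exact hg0.ne' hgs

variable {f : E →ₗ[ℝ] E} {a : E}

lemma exists_norm_eq_one_add_eq_smul_of_eigenvector {μ l : ℝ} {v : E} (ha : a ≠ 0)
    (hfa : f a = μ • a) (hl : 0 < l) (hv : v ≠ 0) (hfv : f v = l • v) :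
    ∃ c : ℝ, 0 < c ∧ ∃ x : E, ‖x‖ = 1 ∧ a + f x = c • x := by
  have ha' : 0 < ‖a‖ := norm_pos_iff.mpr ha
  by_cases hμ : 0 < ‖a‖ + μ
  · refine ⟨‖a‖ + μ, hμ, ‖a‖⁻¹ • a, by simp [norm_smul, ha'.ne'], ?_⟩
    rw [map_smul, hfa, smul_smul, smul_smul, add_mul, mul_inv_cancel₀ ha'.ne', add_smul,
      one_smul, mul_comm]
  · have hlμ : ‖a‖ < l - μ := by linarith
    have hy : ‖(l - μ)⁻¹ • a‖ ≤ 1 := by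
      rw [norm_smul, Real.norm_of_nonneg (by simp; linarith), inv_mul_le_one₀ (by linarith)]
      exact hlμ.le
    obtain ⟨t, ht⟩ := exists_norm_add_smul_eq_one hy hv
    refine ⟨l, hl, _, ht, ?_⟩
    rw [map_add, map_smul, map_smul, hfa, hfv]
    have : l - μ ≠ 0 := by linarith
    match_scalars
    · field_simp
      ring
    · ring

lemma exists_norm_eq_one_add_eq_smul_of_not_eigenvector {r₁ r₂ : ℝ}
    (hf : ∀ y, f (f y) = (r₁ + r₂) • f y - (r₁ * r₂) • y) (h₂₁ : r₂ ≤ r₁) (h₁ : 0 ≤ r₁)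
    (hfa : f a ≠ r₂ • a) :
    ∃ c : ℝ, 0 < c ∧ ∃ x : E, ‖x‖ = 1 ∧ a + f x = c • x := by
  obtain ⟨s, hs, hnorm⟩ := exists_pos_norm_smul_add_eq (a := a) (sub_ne_zero.mpr hfa)
    (sub_nonneg.mpr h₂₁)
  set q := s • a + (f a - r₂ • a)
  set p := s * (s + (r₁ - r₂))
  have hp : 0 < p := by have := sub_nonneg.mpr h₂₁; positivity
  -- `p⁻¹ • q` is `(c - f)⁻¹ a` for `c = r₁ + s`
  have hfq : f q = (r₁ + s) • q - p • a := by
    simp only [q, p, map_add, map_smul, map_sub, hf a]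
    module
  refine ⟨r₁ + s, by linarith, p⁻¹ • q, ?_, ?_⟩
  · rw [norm_smul, hnorm, Real.norm_of_nonneg (inv_nonneg.mpr hp.le), inv_mul_cancel₀ hp.ne']
  · rw [map_smul, hfq, smul_sub, smul_smul p⁻¹ p, inv_mul_cancel₀ hp.ne', one_smul]
    module

theorem exists_norm_eq_one_add_eq_smul {τ δ l : ℝ} {v : E}
    (hf : ∀ y, f (f y) = τ • f y - δ • y) (hl : 0 < l) (hv : v ≠ 0) (hfv : f v = l • v)
    (ha : a ≠ 0) :
    ∃ c : ℝ, 0 < c ∧ ∃ x : E, ‖x‖ = 1 ∧ a + f x = c • x := by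
  have hδ : δ = l * (τ - l) := by
    have h := hf v
    rw [hfv, map_smul, hfv] at h
    have h0 : (l * l - τ * l + δ) • v = 0 := by
      calc (l * l - τ * l + δ) • v = l • l • v - (τ • l • v - δ • v) := by module
        _ = 0 := by rw [h, sub_self]
    linarith [(smul_eq_zero.mp h0).resolve_right hv]
  have hf' : ∀ y, f (f y) = (max l (τ - l) + min l (τ - l)) • f y
      - (max l (τ - l) * min l (τ - l)) • y := by
    rw [max_add_min, max_mul_min, ← hδ, add_sub_cancel]
    exact hf
  by_cases hfa : f a = min l (τ - l) • a
  · exact exists_norm_eq_one_add_eq_smul_of_eigenvector ha hfa hl hv hfv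
  · exact exists_norm_eq_one_add_eq_smul_of_not_eigenvector hf' min_le_max
      (hl.le.trans (le_max_left _ _)) hfa

end NormedSpace

lemma Matrix.toEuclideanLin_apply_apply_fin_two (M : Matrix (Fin 2) (Fin 2) ℝ)
    (y : EuclideanSpace ℝ (Fin 2)) :
    M.toEuclideanLin (M.toEuclideanLin y) = M.trace • M.toEuclideanLin y - M.det • y := by
  have h := M.aeval_self_charpoly
  simp only [charpoly_fin_two, map_add, map_sub, map_pow, map_mul, Polynomial.aeval_X,
    Polynomial.aeval_C, Algebra.algebraMap_eq_smul_one, smul_one_mul] at h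
  have hM : M * M = M.trace • M - M.det • 1 := by
    calc M * M = (M ^ 2 - M.trace • M + M.det • 1) + (M.trace • M - M.det • 1) := by
          rw [sq]; abel
      _ = M.trace • M - M.det • 1 := by rw [h, zero_add]
  simpa using congrArg (fun N => N.toEuclideanLin y) hM

lemma affAct_eq_self {m : ℕ} {A : Matrix (Fin m) (Fin m) ℝ} {a x : EuclideanSpace ℝ (Fin m)}
    {c : ℝ} (hc : 0 < c) (hx : ‖x‖ = 1) (h : a + A.toEuclideanLin x = c • x) :
    affAct A a x = x := by
  rw [affAct, h, norm_smul, Real.norm_of_nonneg hc.le, hx, mul_one, smul_smul,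
    inv_mul_cancel₀ hc.ne', one_smul]

theorem stmt14_general (T : GL (Fin 2) ℝ)
    (heig : ∃ l : ℝ, 0 < l ∧ ∃ v : EuclideanSpace ℝ (Fin 2), v ≠ 0 ∧
      Matrix.toEuclideanLin (T : Matrix (Fin 2) (Fin 2) ℝ) v = l • v)
    (a : EuclideanSpace ℝ (Fin 2)) (ha : a ≠ 0) :
    ∃ x : EuclideanSpace ℝ (Fin 2), ‖x‖ = 1 ∧
      affAct (T : Matrix (Fin 2) (Fin 2) ℝ) a x = x := by
  obtain ⟨l, hl, v, hv, hTv⟩ := heig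
  obtain ⟨c, hc, x, hx, hax⟩ := exists_norm_eq_one_add_eq_smul
    (toEuclideanLin_apply_apply_fin_two _) hl hv hTv ha
  exact ⟨x, hx, affAct_eq_self hc hx hax⟩

theorem stmt14 (T : GL (Fin 2) ℝ)
    (heig : ∃ l : ℝ, 0 < l ∧ ∃ v : EuclideanSpace ℝ (Fin 2), v ≠ 0 ∧
      Matrix.toEuclideanLin (T : Matrix (Fin 2) (Fin 2) ℝ) v = l • v)
    (a : EuclideanSpace ℝ (Fin 2)) (ha : a ≠ 0)
    (hlt : ‖Matrix.toEuclideanLin ((T⁻¹ : GL (Fin 2) ℝ) : Matrix (Fin 2) (Fin 2) ℝ) a‖ < 1) :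
    ∃ x : EuclideanSpace ℝ (Fin 2), ‖x‖ = 1 ∧
      affAct (T : Matrix (Fin 2) (Fin 2) ℝ) a x = x :=
  stmt14_general T heig a ha
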